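/- For every function f : {-1,1} → ℝ, the two-point log-Sobolev inequality holds with constant 1: ½·(f(1) − f(−1))² ≥ Ent(f²), where the expectation underlying Ent is with respect to the uniform measure on {-1,1}. Equivalently, for every s ∈ [−1,1]: 2s² ≥ ½(1+s)²·log((1+s)²) + ½(1−s)²·log((1−s)²) − (1+s²)·log(1+s²). -/

import Mathlib

/-!
Entropy is homogeneous and `Ent(f²)` only sees `|f|`, while `(|a| - |b|)² ≤ (a - b)²`; so it
suffices to treat `f = t • (1 + s, 1 - s)` with `s ∈ [-1, 1]`, i.e. to show that
`2 s² - Ent((1 + s)², (1 - s)²)` is nonnegative. This defect is even and vanishes at `0` together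
with its derivative, and its second derivative
`2 log ((1 + s²) / (1 - s²)) + 4 s² / (1 + s²)` is nonnegative on `(-1, 1)`.
-/

noncomputable section

/-- Expectation over the uniform measure on the two-point space `{-1,1}`,
identified with `Bool` (`true ↦ 1`, `false ↦ -1`). -/
def twoExpect (g : Bool → ℝ) : ℝ := (g true + g false) / 2

/-- Entropy on the two-point space: `Ent(g) = E[g log g] − (E g) log (E g)`
(with `0 log 0 = 0`, as `Real.log 0 = 0`). -/
def twoEntropy (g : Bool → ℝ) : ℝ :=
  twoExpect (fun b => g b * Real.log (g b)) - twoExpect g * Real.log (twoExpect g)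

open Real Set

lemma mul_mul_log_mul (c x : ℝ) : c * x * log (c * x) = c * log c * x + c * (x * log x) := by
  rcases eq_or_ne c 0 with rfl | hc
  · simp
  rcases eq_or_ne x 0 with rfl | hx
  · simp
  rw [log_mul hc hx]
  ring

lemma twoEntropy_const_mul (c : ℝ) (g : Bool → ℝ) :
    twoEntropy (fun b => c * g b) = c * twoEntropy g := by
  have hE : twoExpect (fun b => c * g b) = c * twoExpect g := by
    unfold twoExpect
    ring
  simp only [twoEntropy, hE, mul_mul_log_mul]
  unfold twoExpect
  ring

lemma twoEntropy_cond_sq (s : ℝ) :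
    twoEntropy (fun b => bif b then (1 + s) ^ 2 else (1 - s) ^ 2) =
      (1/2) * (1 + s) ^ 2 * log ((1 + s) ^ 2) + (1/2) * (1 - s) ^ 2 * log ((1 - s) ^ 2)
        - (1 + s ^ 2) * log (1 + s ^ 2) := by
  have hE : twoExpect (fun b => bif b then (1 + s) ^ 2 else (1 - s) ^ 2) = 1 + s ^ 2 := by
    simp only [twoExpect, cond_true, cond_false]
    ring
  rw [twoEntropy, hE]
  simp only [twoExpect, cond_true, cond_false]
  ring

lemma exists_eq_mul_one_add_and_eq_mul_one_sub {u v : ℝ} (hu : 0 ≤ u) (hv : 0 ≤ v) :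
    ∃ t s : ℝ, -1 ≤ s ∧ s ≤ 1 ∧ u = t * (1 + s) ∧ v = t * (1 - s) := by
  rcases (add_nonneg hu hv).eq_or_lt with h | h
  · exact ⟨0, 0, by norm_num, by norm_num, by linarith, by linarith⟩
  refine ⟨(u + v) / 2, (u - v) / (u + v), ?_, ?_, ?_, ?_⟩
  · rw [le_div_iff₀ h]
    linarith
  · rw [div_le_one h]
    linarith
  · field_simp
    ring
  · field_simp
    ring

lemma monotoneOn_of_hasDerivAt_nonneg {D : Set ℝ} (hD : Convex ℝ D) {f f' : ℝ → ℝ}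
    (hf : ∀ x ∈ D, HasDerivAt f (f' x) x) (hf' : ∀ x ∈ interior D, 0 ≤ f' x) :
    MonotoneOn f D :=
  monotoneOn_of_hasDerivWithinAt_nonneg hD (fun x hx => (hf x hx).continuousAt.continuousWithinAt)
    (fun x hx => (hf x (interior_subset hx)).hasDerivWithinAt) hf'

/-- `2 s² - Ent((1 + s)², (1 - s)²)`, written with `log ((1 ± s)²) = 2 log (1 ± s)`. -/
def logSobolevDefect (s : ℝ) : ℝ :=
  2 * s ^ 2 - (1 + s) ^ 2 * log (1 + s) - (1 - s) ^ 2 * log (1 - s)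
    + (1 + s ^ 2) * log (1 + s ^ 2)

def logSobolevDefectDeriv (s : ℝ) : ℝ :=
  4 * s - 2 * (1 + s) * log (1 + s) + 2 * (1 - s) * log (1 - s) + 2 * s * log (1 + s ^ 2)

lemma hasDerivAt_logSobolevDefect {x : ℝ} (h₁ : 1 + x ≠ 0) (h₂ : 1 - x ≠ 0) :
    HasDerivAt logSobolevDefect (logSobolevDefectDeriv x) x := by
  have hs := (hasDerivAt_id' x).fun_pow 2
  have hp := (hasDerivAt_id' x).const_add 1
  have hm := (hasDerivAt_id' x).const_sub 1
  have hq := hs.const_add 1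
  have := ((hs.const_mul 2).fun_sub ((hp.fun_pow 2).fun_mul (hp.log h₁))).fun_sub
    ((hm.fun_pow 2).fun_mul (hm.log h₂)) |>.fun_add (hq.fun_mul (hq.log (by positivity)))
  refine this.congr_deriv ?_
  simp only [logSobolevDefectDeriv]
  field_simp
  ring

lemma hasDerivAt_logSobolevDefectDeriv {x : ℝ} (h₁ : 1 + x ≠ 0) (h₂ : 1 - x ≠ 0) :
    HasDerivAt logSobolevDefectDeriv
      (2 * log (1 + x ^ 2) - 2 * log (1 + x) - 2 * log (1 - x) + 4 * x ^ 2 / (1 + x ^ 2)) x := by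
  have hi := hasDerivAt_id' x
  have hp := hi.const_add 1
  have hm := hi.const_sub 1
  have hq := (hi.fun_pow 2).const_add 1
  have := ((hi.const_mul 4).fun_sub ((hp.const_mul 2).fun_mul (hp.log h₁))).fun_add
    ((hm.const_mul 2).fun_mul (hm.log h₂)) |>.fun_add ((hi.const_mul 2).fun_mul (hq.log (by positivity)))
  refine this.congr_deriv ?_
  field_simp
  ring

lemma logSobolevDefectDeriv_nonneg {s : ℝ} (hs : s ∈ Ico (0 : ℝ) 1) :
    0 ≤ logSobolevDefectDeriv s := by
  have hmono : MonotoneOn logSobolevDefectDeriv (Ico 0 1) := by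
    refine monotoneOn_of_hasDerivAt_nonneg (convex_Ico 0 1)
      (fun x hx => hasDerivAt_logSobolevDefectDeriv (by linarith [hx.1]) (by linarith [hx.2])) ?_
    rw [interior_Ico]
    rintro x ⟨hx₀, hx₁⟩
    have hlog : log (1 + x) + log (1 - x) ≤ log (1 + x ^ 2) := by
      rw [← log_mul (by linarith) (by linarith)]
      exact log_le_log (by nlinarith) (by nlinarith)
    have : 0 ≤ 4 * x ^ 2 / (1 + x ^ 2) := by positivity
    linarith
  simpa [logSobolevDefectDeriv] using hmono ⟨le_rfl, zero_lt_one⟩ hs hs.1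

lemma logSobolevDefect_nonneg_of_mem_Ico {s : ℝ} (hs : s ∈ Ico (0 : ℝ) 1) :
    0 ≤ logSobolevDefect s := by
  have hmono : MonotoneOn logSobolevDefect (Ico 0 1) := by
    refine monotoneOn_of_hasDerivAt_nonneg (convex_Ico 0 1)
      (fun x hx => hasDerivAt_logSobolevDefect (by linarith [hx.1]) (by linarith [hx.2])) ?_
    rw [interior_Ico]
    exact fun x hx => logSobolevDefectDeriv_nonneg (Ioo_subset_Ico_self hx)
  simpa [logSobolevDefect] using hmono ⟨le_rfl, zero_lt_one⟩ hs hs.1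

lemma logSobolevDefect_one_nonneg : 0 ≤ logSobolevDefect 1 := by
  have hlog : log 2 ≤ 1 := by linarith [log_le_sub_one_of_pos (zero_lt_two : (0 : ℝ) < 2)]
  norm_num [logSobolevDefect]
  linarith

lemma logSobolevDefect_neg (s : ℝ) : logSobolevDefect (-s) = logSobolevDefect s := by
  simp only [logSobolevDefect, neg_sq, ← sub_eq_add_neg, sub_neg_eq_add]
  ring

lemma logSobolevDefect_nonneg {s : ℝ} (h₁ : -1 ≤ s) (h₂ : s ≤ 1) : 0 ≤ logSobolevDefect s := by
  wlog hs : 0 ≤ s generalizing s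
  · simpa [logSobolevDefect_neg] using this (s := -s) (by linarith) (by linarith) (by linarith)
  rcases h₂.lt_or_eq with h₂ | rfl
  · exact logSobolevDefect_nonneg_of_mem_Ico ⟨hs, h₂⟩
  · exact logSobolevDefect_one_nonneg

lemma two_point_logSobolev_scalar {s : ℝ} (h₁ : -1 ≤ s) (h₂ : s ≤ 1) :
    (1/2) * (1 + s) ^ 2 * log ((1 + s) ^ 2) + (1/2) * (1 - s) ^ 2 * log ((1 - s) ^ 2)
      - (1 + s ^ 2) * log (1 + s ^ 2) ≤ 2 * s ^ 2 := by
  have := logSobolevDefect_nonneg h₁ h₂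
  rw [log_pow, log_pow]
  unfold logSobolevDefect at this
  push_cast
  linarith

/-- **Two-point log-Sobolev inequality with constant 1**:
`½(f(1) − f(−1))² ≥ Ent(f²)` for every `f : {-1,1} → ℝ`; equivalently, for every
`s ∈ [−1,1]`, `2s² ≥ ½(1+s)² log((1+s)²) + ½(1−s)² log((1−s)²) − (1+s²) log(1+s²)`. -/
theorem two_point_logSobolev :
    (∀ f : Bool → ℝ, twoEntropy (fun b => f b ^ 2) ≤ (1/2) * (f true - f false) ^ 2) ∧
    (∀ s : ℝ, -1 ≤ s → s ≤ 1 →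
      (1/2) * (1 + s) ^ 2 * Real.log ((1 + s) ^ 2)
        + (1/2) * (1 - s) ^ 2 * Real.log ((1 - s) ^ 2)
        - (1 + s ^ 2) * Real.log (1 + s ^ 2) ≤ 2 * s ^ 2) := by
  refine ⟨fun f => ?_, fun s => two_point_logSobolev_scalar⟩
  obtain ⟨t, s, h₁, h₂, ht, hf⟩ :=
    exists_eq_mul_one_add_and_eq_mul_one_sub (abs_nonneg (f true)) (abs_nonneg (f false))
  have hsq : (fun b => f b ^ 2) = fun b => t ^ 2 * bif b then (1 + s) ^ 2 else (1 - s) ^ 2 := by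
    funext b
    cases b <;> simp only [cond_true, cond_false, ← sq_abs (f _), ht, hf, mul_pow]
  calc twoEntropy (fun b => f b ^ 2)
      = t ^ 2 * ((1/2) * (1 + s) ^ 2 * log ((1 + s) ^ 2)
          + (1/2) * (1 - s) ^ 2 * log ((1 - s) ^ 2) - (1 + s ^ 2) * log (1 + s ^ 2)) := by
        rw [hsq, twoEntropy_const_mul, twoEntropy_cond_sq]
    _ ≤ t ^ 2 * (2 * s ^ 2) := by gcongr; exact two_point_logSobolev_scalar h₁ h₂
    _ = (1/2) * (|f true| - |f false|) ^ 2 := by rw [ht, hf]; ring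
    _ ≤ (1/2) * (f true - f false) ^ 2 :=
        mul_le_mul_of_nonneg_left (sq_le_sq.mpr (abs_abs_sub_abs_le_abs_sub _ _)) (by norm_num)
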